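/- arXiv:1003.3772 — 3 statements merged into one kernel-verified Lean document; each statement's English description precedes it below -/
import Mathlib

section
/- Let H be a normal subgroup of a finite group N (playing the role of N_G H with W = N/H). For g ∈ N, the element β^N_H([g]) ∈ Z_p[H^{ab}] is zero unless g ∈ H, and for g ∈ H it equals Σ_{x ∈ W} x⁻¹ḡx, the trace of ḡ under the W-action; in particular it lies in the image T_H of the trace map. -/
/- STATEMENT 3: `H` a normal subgroup of a finite group `N`, `W = N/H`.  For `g ∈ N`,
`β^N_H([g]) = 0` unless `g ∈ H`, and for `g ∈ H` it equals `Σ_{x ∈ W} x⁻¹ ḡ x`; in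
particular it lies in the image `T_H` of the trace map. -/

open scoped Classical

/-- Conjugation `h ↦ n⁻¹ h n` on a normal subgroup, as a hom `H →* H`. -/
def conjHom' {N : Type*} [Group N] (H : Subgroup N) [hH : H.Normal] (n : N) :
    ↥H →* ↥H where
  toFun h := ⟨n⁻¹ * h.1 * n, by simpa using hH.conj_mem h.1 h.2 n⁻¹⟩
  map_one' := by ext; simp
  map_mul' a b := by ext; simp; group

/-- The trace map `x ↦ Σ_{w ∈ W} w x w⁻¹` on `ℤ_p[H^{ab}]`, computed using a set
`TW` of coset representatives of `H` in `N`. -/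
noncomputable def traceMap {p : ℕ} [Fact p.Prime] {N : Type*} [Group N] (H : Subgroup N)
    [H.Normal] (TW : Finset N) (x : MonoidAlgebra ℤ_[p] (Abelianization ↥H)) :
    MonoidAlgebra ℤ_[p] (Abelianization ↥H) :=
  ∑ n ∈ TW, MonoidAlgebra.mapDomain (Abelianization.map (conjHom' H n)) x

/-- `β^N_H([g])` computed with the transversal `T`. -/
noncomputable def bmap {p : ℕ} [Fact p.Prime] {N : Type*} [Group N]
    (H : Subgroup N) (T : Finset N) (g : N) : MonoidAlgebra ℤ_[p] (Abelianization ↥H) :=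
  ∑ x ∈ T, if h : x⁻¹ * g * x ∈ H then
    MonoidAlgebra.single (Abelianization.of (⟨x⁻¹ * g * x, h⟩ : ↥H)) (1 : ℤ_[p]) else 0

theorem Subgroup.Normal.conj_mem_iff {N : Type*} [Group N] {H : Subgroup N} (hH : H.Normal)
    (x g : N) : x⁻¹ * g * x ∈ H ↔ g ∈ H := by
  rw [hH.mem_comm_iff, mul_inv_cancel_left]

section Beta

variable {p : ℕ} [Fact p.Prime] {N : Type*} [Group N] (H : Subgroup N) [H.Normal]
  (T : Finset N)

theorem bmap_of_notMem {g : N} (hg : g ∉ H) : bmap (p := p) H T g = 0 :=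
  Finset.sum_eq_zero fun x _ =>
    dif_neg fun h => hg ((Subgroup.Normal.conj_mem_iff ‹_› x g).mp h)

theorem bmap_of_mem {g : N} (hg : g ∈ H) :
    bmap (p := p) H T g =
      ∑ x ∈ T, MonoidAlgebra.single (Abelianization.of (conjHom' H x ⟨g, hg⟩)) (1 : ℤ_[p]) :=
  Finset.sum_congr rfl fun x _ =>
    dif_pos ((Subgroup.Normal.conj_mem_iff ‹_› x g).mpr hg)

theorem traceMap_single (a : Abelianization H) (r : ℤ_[p]) :
    traceMap H T (MonoidAlgebra.single a r) =
      ∑ x ∈ T, MonoidAlgebra.single (Abelianization.map (conjHom' H x) a) r :=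
  Finset.sum_congr rfl fun _ _ => MonoidAlgebra.mapDomain_single

theorem bmap_mem_range_traceMap (g : N) :
    bmap (p := p) H T g ∈ Set.range (traceMap H T) := by
  by_cases hg : g ∈ H
  · refine ⟨MonoidAlgebra.single (Abelianization.of ⟨g, hg⟩) 1, ?_⟩
    simp only [traceMap_single, Abelianization.map_of, bmap_of_mem H T hg]
  · exact ⟨0, by simp [traceMap, bmap_of_notMem H T hg]⟩

end Beta

theorem stmt3_general (p : ℕ) [Fact p.Prime] (N : Type*) [Group N]
    (H : Subgroup N) [H.Normal] (g : N)
    (T : Finset N) :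
    (g ∉ H → bmap (p := p) H T g = 0) ∧
    (∀ hg : g ∈ H,
      bmap (p := p) H T g =
        ∑ x ∈ T, MonoidAlgebra.single
          (Abelianization.of (conjHom' H x (⟨g, hg⟩ : ↥H))) (1 : ℤ_[p])) ∧
    bmap (p := p) H T g ∈ Set.range (traceMap (p := p) H T) :=
  ⟨bmap_of_notMem H T, bmap_of_mem H T, bmap_mem_range_traceMap H T g⟩

theorem stmt3 (p : ℕ) [Fact p.Prime] (N : Type*) [Group N] [Fintype N]
    (H : Subgroup N) [H.Normal] (g : N)
    (T : Finset N) (hT : ∀ n : N, ∃! x, x ∈ T ∧ x⁻¹ * n ∈ H) :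
    (g ∉ H → bmap (p := p) H T g = 0) ∧
    (∀ hg : g ∈ H,
      bmap (p := p) H T g =
        ∑ x ∈ T, MonoidAlgebra.single
          (Abelianization.of (conjHom' H x (⟨g, hg⟩ : ↥H))) (1 : ℤ_[p])) ∧
    bmap (p := p) H T g ∈ Set.range (traceMap (p := p) H T) :=
  stmt3_general p N H g T
end

section
/- Let G be a finite p-group. Suppose (a_H)_{H ≤ G} is a family with a_H ∈ Z_p[H^{ab}] satisfying: (A1) for all H ≤ H₁ ≤ G with [H₁,H₁] ≤ H, tr_{H,H₁}(a_{H₁}) = π_{H,H₁}(a_H). If a_P = 0 for every cyclic subgroup P ≤ G, then a_H = 0 for every subgroup H ≤ G. -/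
open scoped Classical

/-- `H/[H₁,H₁]`, realised as the image of `H` in `H₁^{ab}`. -/
def Smap {G : Type*} [Group G] (H H₁ : Subgroup G) : Subgroup (Abelianization ↥H₁) :=
  Subgroup.map Abelianization.of (H.subgroupOf H₁)

/-- The trace map `tr_{H,H₁} : ℤ_p[H₁^{ab}] → ℤ_p[H/[H₁,H₁]]`. -/
noncomputable def trMap {p : ℕ} [Fact p.Prime] {G : Type*} [Group G] (H H₁ : Subgroup G)
    (x : MonoidAlgebra ℤ_[p] (Abelianization ↥H₁)) : MonoidAlgebra ℤ_[p] ↥(Smap H H₁) :=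
  MonoidAlgebra.ofCoeff (x.coeff.sum fun k c =>
    if hk : k ∈ Smap H H₁ then
      Finsupp.single (⟨k, hk⟩ : ↥(Smap H H₁)) ((H.relIndex H₁ : ℤ_[p]) * c)
    else 0)

/-- The natural map `H → H/[H₁,H₁]` (through the inclusion `H ≤ H₁`). -/
def toS {G : Type*} [Group G] (H H₁ : Subgroup G) (hle : H ≤ H₁) : ↥H →* ↥(Smap H H₁) :=
  MonoidHom.codRestrict (Abelianization.of.comp (Subgroup.inclusion hle)) _
    (fun h => ⟨Subgroup.inclusion hle h, by simp [Subgroup.mem_subgroupOf], rfl⟩)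

/-- `π_{H,H₁} : ℤ_p[H^{ab}] → ℤ_p[H/[H₁,H₁]]`. -/
noncomputable def piMap {p : ℕ} [Fact p.Prime] {G : Type*} [Group G] (H H₁ : Subgroup G)
    (hle : H ≤ H₁) (x : MonoidAlgebra ℤ_[p] (Abelianization ↥H)) :
    MonoidAlgebra ℤ_[p] ↥(Smap H H₁) :=
  MonoidAlgebra.ofCoeff (Finsupp.mapDomain (Abelianization.lift (toS H H₁ hle)) x.coeff)

/-! Induction on `H`. A non-cyclic `H` is a nilpotent group, so `[H,H]` lies in its Frattini
subgroup; hence for every `h ∈ H` the subgroup `P = ⟨h⟩[H,H]` is proper and `a_P = 0`. By (A1),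
`tr_{P,H}(a_H) = π_{P,H}(a_P) = 0`, and the coefficient of `tr_{P,H}(a_H)` at the class of `h` is
`[H:P]` times the coefficient of `a_H` there; `ℤ_p` has characteristic zero. -/

section NilpotentGroup

variable {G : Type*} [Group G] [Group.IsNilpotent G]

lemma commutator_le_of_isCoatom {M : Subgroup G} (hM : IsCoatom M) : commutator G ≤ M := by
  have : M.Normal :=
    Subgroup.NormalizerCondition.normal_of_coatom M Group.normalizerCondition_of_isNilpotent hM
  have : IsSimpleOrder (Set.Ici M) := Set.isSimpleOrder_Ici_iff_isCoatom.2 hM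
  have : IsSimpleOrder (Subgroup (G ⧸ M)) :=
    OrderIso.isSimpleOrder (β := Set.Ici M) (QuotientGroup.comapMk'OrderIso M)
  have : IsSimpleGroup (G ⧸ M) := by
    have : Nontrivial (G ⧸ M) := Subgroup.nontrivial_iff.1 inferInstance
    exact ⟨fun N _ => IsSimpleOrder.eq_bot_or_eq_top N⟩
  exact Subgroup.Normal.quotient_commutative_iff_commutator_le.1 inferInstance

lemma commutator_le_frattini : commutator G ≤ frattini G :=
  le_iInf₂ fun _ => commutator_le_of_isCoatom

lemma isCyclic_of_zpowers_sup_commutator_eq_top [Finite G] {g : G}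
    (h : Subgroup.zpowers g ⊔ commutator G = ⊤) : IsCyclic G :=
  isCyclic_iff_exists_zpowers_eq_top.2
    ⟨g, frattini_nongenerating (top_unique (h ▸ sup_le_sup_left commutator_le_frattini _))⟩

end NilpotentGroup

lemma Subgroup.zpowers_sup_commutator_lt {G : Type*} [Group G] {H : Subgroup G} [Finite H]
    [Group.IsNilpotent H] (hH : ¬IsCyclic H) (h : H) : zpowers (h : G) ⊔ ⁅H, H⁆ < H := by
  refine lt_of_le_of_ne (sup_le (zpowers_le.2 h.2) H.commutator_le_self) fun hP => hH ?_
  refine isCyclic_of_zpowers_sup_commutator_eq_top (g := h) (map_injective H.subtype_injective ?_)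
  rw [map_sup, MonoidHom.map_zpowers, _root_.commutator_def, map_commutator,
    ← MonoidHom.range_eq_map, range_subtype]
  exact hP

section TraceAndProjection

variable {p : ℕ} [Fact p.Prime] {G : Type*} [Group G] {H H₁ : Subgroup G}

lemma trMap_coeff_of_mem (x : MonoidAlgebra ℤ_[p] (Abelianization H₁)) {k : Abelianization H₁}
    (hk : k ∈ Smap H H₁) :
    (trMap H H₁ x).coeff ⟨k, hk⟩ = (H.relIndex H₁ : ℤ_[p]) * x.coeff k := by
  rw [trMap, MonoidAlgebra.coeff_ofCoeff, Finsupp.sum_apply, Finsupp.sum_eq_single k]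
  · rw [dif_pos hk, Finsupp.single_eq_same]
  · intro b _ hb
    split_ifs
    · exact Finsupp.single_eq_of_ne (by simpa [Subtype.ext_iff] using hb.symm)
    · rfl
  · intro _
    simp

lemma coeff_eq_zero_of_trMap_eq_zero (hH : H.relIndex H₁ ≠ 0)
    {x : MonoidAlgebra ℤ_[p] (Abelianization H₁)} (hx : trMap H H₁ x = 0)
    {k : Abelianization H₁} (hk : k ∈ Smap H H₁) : x.coeff k = 0 := by
  have := trMap_coeff_of_mem x hk
  rw [hx, MonoidAlgebra.coeff_zero, Finsupp.coe_zero, Pi.zero_apply, eq_comm] at this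
  exact (mul_eq_zero.1 this).resolve_left (Nat.cast_ne_zero.2 hH)

@[simp]
lemma piMap_zero (hle : H ≤ H₁) : piMap (p := p) H H₁ hle 0 = 0 := by
  rw [piMap, MonoidAlgebra.coeff_zero, Finsupp.mapDomain_zero]
  rfl

end TraceAndProjection

theorem stmt8 (p : ℕ) [Fact p.Prime] (G : Type*) [Group G] [Fintype G]
    (hG : IsPGroup p G)
    (a : ∀ H : Subgroup G, MonoidAlgebra ℤ_[p] (Abelianization ↥H))
    (hA1 : ∀ H H₁ : Subgroup G, ∀ hle : H ≤ H₁, ⁅H₁, H₁⁆ ≤ H →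
      trMap (p := p) H H₁ (a H₁) = piMap (p := p) H H₁ hle (a H))
    (hcyc : ∀ P : Subgroup G, IsCyclic ↥P → a P = 0) :
    ∀ H : Subgroup G, a H = 0 := by
  intro H
  induction H using WellFoundedLT.induction with
  | ind H ih =>
  by_cases hH : IsCyclic H
  · exact hcyc H hH
  have : Group.IsNilpotent H := (hG.to_subgroup H).isNilpotent
  refine MonoidAlgebra.ext (Finsupp.ext fun k => ?_)
  obtain ⟨h, rfl⟩ := QuotientGroup.mk_surjective k
  set P := Subgroup.zpowers (h : G) ⊔ ⁅H, H⁆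
  have hPH : P < H := Subgroup.zpowers_sup_commutator_lt hH h
  have htr : trMap P H (a H) = 0 := by
    rw [hA1 P H hPH.le le_sup_right, ih P hPH, piMap_zero]
  exact coeff_eq_zero_of_trMap_eq_zero Subgroup.index_ne_zero_of_finite htr
    ⟨h, Subgroup.mem_subgroupOf.2 (Subgroup.mem_sup_left (Subgroup.mem_zpowers _)), rfl⟩
end

section
/- Let G be a finite p-group and (a_H)_{H∈C} ∈ Φ_C, i.e., a tuple of elements a_H ∈ Z_p[H] over cyclic subgroups satisfying A1 (compatibility), A2 (G-conjugation invariance), A3 (a_H ∈ T_H, the image of the W_G H-trace on Z_p[H]). Then τ^G_C((a_H)) ∈ Z_p[Conj(G)] (a priori it only lies in Q_p[Conj(G)]). -/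
/-!
`τ` only sees the coefficients of `a_H` at generators of `H`, weighted by
`1 / ([G : N_G H] · [N_G H : H])`. The factor `[G : N_G H]` is the size of the conjugacy orbit
of `H`, and by (A2) the generator coefficient sum of `a_H` in a fixed class, divided by
`[N_G H : H]`, is constant along that orbit; so the sum over cyclic subgroups collapses to one
such term per conjugacy class of cyclic subgroups. By (A3), `a_H` is a `W_G H`-trace, and
conjugating by an element of `N_G H` permutes the generators of `H` inside each conjugacy class
of `G`, so the generator coefficient sum of `a_H` is `[N_G H : H]` times an element of `ℤ_p`.
-/

open scoped Classical

/-- `β^{H'}_H : ℤ_p[H'] → ℤ_p[H]` for nested cyclic subgroups. -/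
noncomputable def betaRes {p : ℕ} [Fact p.Prime] {G : Type*} [Group G]
    (H H' : Subgroup G) (x : MonoidAlgebra ℤ_[p] ↥H') : MonoidAlgebra ℤ_[p] ↥H :=
  MonoidAlgebra.ofCoeff (x.coeff.sum fun h c =>
    if hh : (h : G) ∈ H then
      Finsupp.single (⟨(h : G), hh⟩ : ↥H) ((H.relIndex H' : ℤ_[p]) * c)
    else 0)

/-- The conjugate subgroup `g₁ P g₁⁻¹`. -/
def cSub {G : Type*} [Group G] (g₁ : G) (P : Subgroup G) : Subgroup G :=
  Subgroup.map (MulAut.conj g₁).toMonoidHom P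

/-- Conjugation `h ↦ g₁ h g₁⁻¹` as a map `P → g₁ P g₁⁻¹`. -/
def cElt {G : Type*} [Group G] (g₁ : G) (P : Subgroup G) (h : ↥P) : ↥(cSub g₁ P) :=
  ⟨g₁ * h.1 * g₁⁻¹, ⟨h.1, h.2, rfl⟩⟩

/-- The trace map `x ↦ Σ_{w ∈ W_G P} w x w⁻¹` on `ℤ_p[P]`, computed with a set `TN`
of coset representatives of `P` in `N_G P`. -/
noncomputable def traceC {p : ℕ} [Fact p.Prime] {G : Type*} [Group G] (P : Subgroup G)
    (TN : Finset G) (x : MonoidAlgebra ℤ_[p] ↥P) : MonoidAlgebra ℤ_[p] ↥P :=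
  ∑ n ∈ TN, if hn : n ∈ Subgroup.normalizer (P : Set G) then
    MonoidAlgebra.ofCoeff (Finsupp.mapDomain
      (fun h : ↥P => (⟨n * h.1 * n⁻¹, (Subgroup.mem_normalizer_iff.mp hn h.1).mp h.2⟩ : ↥P))
      x.coeff)
  else 0

/-- The set `Φ_C` of tuples satisfying (A1), (A2), (A3) (only the components at
cyclic subgroups are constrained). -/
def PhiC (p : ℕ) [Fact p.Prime] {G : Type*} [Group G] (TN : Subgroup G → Finset G)
    (a : ∀ P : Subgroup G, MonoidAlgebra ℤ_[p] ↥P) : Prop :=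
  (∀ H H' : Subgroup G, IsCyclic ↥H' → H ≤ H' →
      betaRes (p := p) H H' (a H') = a H) ∧
  (∀ (g₁ : G) (P : Subgroup G), IsCyclic ↥P →
      Finsupp.mapDomain (cElt g₁ P) (a P).coeff = (a (cSub g₁ P)).coeff) ∧
  (∀ P : Subgroup G, IsCyclic ↥P →
      a P ∈ Set.range (traceC (p := p) P (TN P)))

/-- `τ^G_C` applied to a tuple. -/
noncomputable def tauFull {p : ℕ} [Fact p.Prime] {G : Type*} [Group G] [Fintype G]
    (a : ∀ H : Subgroup G, MonoidAlgebra ℤ_[p] ↥H) : ConjClasses G →₀ ℚ_[p] :=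
  ∑ H ∈ Finset.univ.filter (fun H : Subgroup G => IsCyclic ↥H),
    (a H).coeff.sum fun h c =>
      if Subgroup.zpowers (h : G) = H then
        ((c : ℚ_[p]) / (((Subgroup.normalizer (H : Set G)).index : ℚ_[p]) * (H.relIndex (Subgroup.normalizer (H : Set G)) : ℚ_[p])))
          • Finsupp.single (ConjClasses.mk (h : G)) (1 : ℚ_[p])
      else 0

open scoped Pointwise Finset

section Conjugation

variable {G : Type*} [Group G]

lemma cSub_injective (g : G) : Function.Injective (cSub g) :=
  Subgroup.map_injective (MulAut.conj g).injective

lemma cSub_eq_self_iff {g : G} {P : Subgroup G} :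
    cSub g P = P ↔ g ∈ Subgroup.normalizer (P : Set G) :=
  Subgroup.mem_normalizer_iff_map_conj_eq.symm

lemma zpowers_conj_eq_cSub (g x : G) :
    Subgroup.zpowers (g * x * g⁻¹) = cSub g (Subgroup.zpowers x) := by
  rw [cSub, MonoidHom.map_zpowers]
  rfl

lemma isCyclic_cSub_iff {g : G} {P : Subgroup G} : IsCyclic (cSub g P) ↔ IsCyclic P :=
  (P.equivMapOfInjective _ (MulAut.conj g).injective).isCyclic.symm

lemma relIndex_normalizer_cSub (g : G) (P : Subgroup G) :
    (cSub g P).relIndex (Subgroup.normalizer (cSub g P : Set G)) =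
      P.relIndex (Subgroup.normalizer (P : Set G)) := by
  rw [cSub, ← Subgroup.map_equiv_normalizer_eq]
  exact Subgroup.relIndex_map_map_of_injective _ _ (MulAut.conj g).injective

instance conjMulAction : MulAction G (Subgroup G) :=
  MulAction.compHom _ MulAut.conj

lemma smul_eq_cSub (g : G) (P : Subgroup G) : g • P = cSub g P := rfl

lemma stabilizer_eq_normalizer (P : Subgroup G) :
    MulAction.stabilizer G P = Subgroup.normalizer (P : Set G) := by
  ext g
  rw [MulAction.mem_stabilizer_iff, smul_eq_cSub, cSub_eq_self_iff]

lemma card_filter_mem_eq_relIndex {P K : Subgroup G} (hPK : P ≤ K) (T : Finset G)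
    (hT : ∀ n ∈ K, ∃! x, x ∈ T ∧ x⁻¹ * n ∈ P) :
    #{x ∈ T | x ∈ K} = P.relIndex K := by
  have hcompl : Subgroup.IsComplement {k : K | (k : G) ∈ T} (P.subgroupOf K) := by
    refine Subgroup.isComplement_iff_existsUnique_inv_mul_mem.mpr fun n => ?_
    obtain ⟨x, ⟨hxT, hxn⟩, hx_unique⟩ := hT n n.2
    have hxK : x ∈ K := by simpa using K.mul_mem n.2 (K.inv_mem (hPK hxn))
    refine ⟨⟨⟨x, hxK⟩, hxT⟩, hxn, fun y hy => Subtype.ext (Subtype.ext ?_)⟩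
    exact hx_unique y ⟨y.2, hy⟩
  rw [Subgroup.relIndex, ← hcompl.ncard_left, ← Set.ncard_coe_finset,
    ← Set.ncard_image_of_injective _ Subtype.val_injective]
  congr 1
  ext x
  simp [and_comm]

end Conjugation

lemma MulAction.sum_div_ncard_orbit {G α K : Type*} [Group G] [MulAction G α] [Fintype α]
    [Field K] [CharZero K] (f : α → K) (hf : ∀ (g : G) x, f (g • x) = f x) :
    ∑ x, f x / (orbit G x).ncard = ∑ ω : orbitRel.Quotient G α, f ω.out := by
  rw [← Finset.sum_fiberwise Finset.univ (fun x => (Quotient.mk'' x : orbitRel.Quotient G α))]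
  refine Finset.sum_congr rfl fun ω _ => ?_
  have hfiber : ({x | (Quotient.mk'' x : orbitRel.Quotient G α) = ω} : Finset α) =
      (orbit G ω.out).toFinset := by
    ext x
    rw [Finset.mem_filter, Set.mem_toFinset, ← orbitRel.Quotient.mem_orbit,
      orbitRel.Quotient.orbit_eq_orbit_out ω Quotient.out_eq']
    simp
  have hconst : ∀ x ∈ orbit G ω.out,
      f x / (orbit G x).ncard = f ω.out / (orbit G ω.out).ncard := by
    rintro x ⟨g, rfl⟩
    rw [hf, orbit_smul]
  rw [hfiber, Finset.sum_congr rfl fun x hx => hconst x (Set.mem_toFinset.mp hx), Finset.sum_const,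
    ← Set.ncard_eq_toFinset_card', nsmul_eq_mul, mul_div_cancel₀ _ ?_]
  exact_mod_cast (Set.ncard_pos (Set.toFinite _)).mpr (nonempty_orbit _) |>.ne'

section GeneratorCoeffSum

variable {R G : Type*} [Semiring R] [Group G] [Fintype G]

noncomputable def generatorCoeffSum (H : Subgroup G) (c : ConjClasses G) :
    MonoidAlgebra R H →+ R :=
  ∑ h ∈ Finset.univ.filter fun h : H =>
      Subgroup.zpowers (h : G) = H ∧ ConjClasses.mk (h : G) = c,
    (Finsupp.applyAddHom h).comp MonoidAlgebra.coeffAddEquiv.toAddMonoidHom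

lemma generatorCoeffSum_apply (H : Subgroup G) (c : ConjClasses G) (x : MonoidAlgebra R H) :
    generatorCoeffSum H c x =
      ∑ h ∈ Finset.univ.filter fun h : H =>
        Subgroup.zpowers (h : G) = H ∧ ConjClasses.mk (h : G) = c, x.coeff h := by
  simp [generatorCoeffSum, AddMonoidHom.finsetSum_apply]

lemma generatorCoeffSum_mapDomain_conj {H K : Subgroup G} {g : G} (hK : cSub g H = K)
    (φ : H → K) (hφ : ∀ h, (φ h : G) = g * h * g⁻¹) (c : ConjClasses G)
    (x : MonoidAlgebra R H) :
    generatorCoeffSum K c (MonoidAlgebra.ofCoeff (Finsupp.mapDomain φ x.coeff)) =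
      generatorCoeffSum H c x := by
  have hinj : Function.Injective φ := fun h₁ h₂ he => by
    simpa [hφ] using congrArg Subtype.val he
  have hsurj : Function.Surjective φ := by
    rintro ⟨k, hk⟩
    obtain ⟨h, hh, rfl⟩ := Subgroup.mem_map.mp (hK ▸ hk)
    exact ⟨⟨h, hh⟩, Subtype.ext (hφ _)⟩
  rw [generatorCoeffSum_apply, generatorCoeffSum_apply]
  refine (Finset.sum_bijective φ ⟨hinj, hsurj⟩ (fun h => ?_) (fun h _ => ?_)).symm
  · have hclass : ConjClasses.mk (g * h * g⁻¹) = ConjClasses.mk (h : G) :=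
      ConjClasses.mk_eq_mk_iff_isConj.mpr (isConj_iff.mpr ⟨g⁻¹, by group⟩)
    simp only [Finset.mem_filter, Finset.mem_univ, true_and, hφ, zpowers_conj_eq_cSub, hclass]
    rw [← hK, (cSub_injective g).eq_iff]
  · rw [MonoidAlgebra.coeff_ofCoeff, Finsupp.mapDomain_apply hinj]

lemma generatorCoeffSum_traceC {p : ℕ} [Fact p.Prime] (H : Subgroup G) (T : Finset G)
    (c : ConjClasses G) (x : MonoidAlgebra ℤ_[p] H) :
    generatorCoeffSum H c (traceC H T x) =
      #{n ∈ T | n ∈ Subgroup.normalizer (H : Set G)} * generatorCoeffSum H c x := by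
  rw [traceC, map_sum, Finset.natCast_card_filter, Finset.sum_mul]
  refine Finset.sum_congr rfl fun n _ => ?_
  split_ifs with hn
  · rw [one_mul]
    exact generatorCoeffSum_mapDomain_conj (cSub_eq_self_iff.mpr hn) _ (fun _ => rfl) c x
  · rw [map_zero, zero_mul]

end GeneratorCoeffSum

section Tau

variable {p : ℕ} [Fact p.Prime] {G : Type*} [Group G] [Fintype G]

lemma tauFull_apply (a : ∀ H : Subgroup G, MonoidAlgebra ℤ_[p] H) (c : ConjClasses G) :
    tauFull a c = ∑ H ∈ Finset.univ.filter (fun H : Subgroup G => IsCyclic H),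
      ((generatorCoeffSum H c (a H) : ℤ_[p]) : ℚ_[p]) /
        ((Subgroup.normalizer (H : Set G)).index *
          H.relIndex (Subgroup.normalizer (H : Set G))) := by
  rw [tauFull, Finsupp.finsetSum_apply]
  refine Finset.sum_congr rfl fun H _ => ?_
  rw [Finsupp.sum_apply, Finsupp.sum_fintype _ _ (fun h => by split_ifs <;> simp),
    generatorCoeffSum_apply, PadicInt.coe_sum, Finset.sum_div, Finset.sum_filter]
  refine Finset.sum_congr rfl fun h _ => ?_
  by_cases hgen : Subgroup.zpowers (h : G) = H <;> by_cases hc : ConjClasses.mk (h : G) = c <;>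
    simp [hgen, hc]

noncomputable def normalizedGeneratorCoeffSum (a : ∀ H : Subgroup G, MonoidAlgebra ℤ_[p] H)
    (c : ConjClasses G) (H : Subgroup G) : ℚ_[p] :=
  if IsCyclic H then
    ((generatorCoeffSum H c (a H) : ℤ_[p]) : ℚ_[p]) /
      H.relIndex (Subgroup.normalizer (H : Set G))
  else 0

lemma tauFull_apply_eq_sum_div_ncard_orbit (a : ∀ H : Subgroup G, MonoidAlgebra ℤ_[p] H)
    (c : ConjClasses G) :
    tauFull a c = ∑ H, normalizedGeneratorCoeffSum a c H / (MulAction.orbit G H).ncard := by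
  rw [tauFull_apply, Finset.sum_filter]
  refine Finset.sum_congr rfl fun H _ => ?_
  rw [← MulAction.index_stabilizer, stabilizer_eq_normalizer, normalizedGeneratorCoeffSum]
  split_ifs <;> simp [div_div, mul_comm]

lemma normalizedGeneratorCoeffSum_smul {a : ∀ H : Subgroup G, MonoidAlgebra ℤ_[p] H}
    (ha : ∀ (g : G) (P : Subgroup G), IsCyclic P →
      Finsupp.mapDomain (cElt g P) (a P).coeff = (a (cSub g P)).coeff)
    (c : ConjClasses G) (g : G) (H : Subgroup G) :
    normalizedGeneratorCoeffSum a c (g • H) = normalizedGeneratorCoeffSum a c H := by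
  rw [normalizedGeneratorCoeffSum, normalizedGeneratorCoeffSum, smul_eq_cSub,
    relIndex_normalizer_cSub]
  by_cases hH : IsCyclic H
  · rw [if_pos (isCyclic_cSub_iff.mpr hH), if_pos hH,
      ← MonoidAlgebra.ofCoeff_coeff (a (cSub g H)), ← ha g H hH,
      generatorCoeffSum_mapDomain_conj rfl _ (fun _ => rfl)]
  · rw [if_neg (mt isCyclic_cSub_iff.mp hH), if_neg hH]

lemma normalizedGeneratorCoeffSum_mem_range {a : ∀ H : Subgroup G, MonoidAlgebra ℤ_[p] H}
    {H : Subgroup G} {T : Finset G}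
    (hT : ∀ n ∈ Subgroup.normalizer (H : Set G), ∃! x, x ∈ T ∧ x⁻¹ * n ∈ H)
    (ha : IsCyclic H → a H ∈ Set.range (traceC H T)) (c : ConjClasses G) :
    normalizedGeneratorCoeffSum a c H ∈ Set.range ((↑·) : ℤ_[p] → ℚ_[p]) := by
  by_cases hH : IsCyclic H
  · obtain ⟨x, hx⟩ := ha hH
    have hrel : (H.relIndex (Subgroup.normalizer (H : Set G)) : ℚ_[p]) ≠ 0 :=
      Nat.cast_ne_zero.mpr Subgroup.isFiniteRelIndex_of_finiteIndex.relIndex_ne_zero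
    have hcoeff : generatorCoeffSum H c (a H) =
        H.relIndex (Subgroup.normalizer (H : Set G)) * generatorCoeffSum H c x := by
      rw [← hx, generatorCoeffSum_traceC,
        card_filter_mem_eq_relIndex Subgroup.le_normalizer _ hT]
    refine ⟨generatorCoeffSum H c x, ?_⟩
    simp only [normalizedGeneratorCoeffSum, if_pos hH, hcoeff, PadicInt.coe_mul,
      PadicInt.coe_natCast]
    field_simp
  · exact ⟨0, by simp [normalizedGeneratorCoeffSum, hH]⟩

end Tau

theorem stmt18_general (p : ℕ) [Fact p.Prime] (G : Type*) [Group G] [Fintype G]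
    (TN : Subgroup G → Finset G)
    (hTN : ∀ P : Subgroup G, ∀ n ∈ Subgroup.normalizer (P : Set G), ∃! x, x ∈ TN P ∧ x⁻¹ * n ∈ P)
    (a : ∀ P : Subgroup G, MonoidAlgebra ℤ_[p] ↥P)
    (ha : PhiC p TN a) :
    ∀ c : ConjClasses G, tauFull a c ∈ Set.range ((↑·) : ℤ_[p] → ℚ_[p]) := by
  intro c
  obtain ⟨-, hA2, hA3⟩ := ha
  choose z hz using fun H => normalizedGeneratorCoeffSum_mem_range (hTN H) (hA3 H) c
  rw [tauFull_apply_eq_sum_div_ncard_orbit,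
    MulAction.sum_div_ncard_orbit _ (normalizedGeneratorCoeffSum_smul hA2 c)]
  exact ⟨∑ ω : MulAction.orbitRel.Quotient G (Subgroup G), z ω.out, by simp [hz]⟩

theorem stmt18 (p : ℕ) [Fact p.Prime] (G : Type*) [Group G] [Fintype G]
    (hG : IsPGroup p G)
    (TN : Subgroup G → Finset G)
    (hTNsub : ∀ P : Subgroup G, ∀ n ∈ TN P, n ∈ Subgroup.normalizer (P : Set G))
    (hTN : ∀ P : Subgroup G, ∀ n ∈ Subgroup.normalizer (P : Set G), ∃! x, x ∈ TN P ∧ x⁻¹ * n ∈ P)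
    (a : ∀ P : Subgroup G, MonoidAlgebra ℤ_[p] ↥P)
    (ha : PhiC p TN a) :
    ∀ c : ConjClasses G, tauFull a c ∈ Set.range ((↑·) : ℤ_[p] → ℚ_[p]) :=
  stmt18_general p G TN hTN a ha
end
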